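/- arXiv:2003.05172 — 7 statements merged into one kernel-verified Lean document; each statement's English description precedes it below -/
import Mathlib

section
/- Let A be a Hopf algebra with a direct sum decomposition A = ⊕_{g∈Γ} A_g over a group Γ that is a cocentral grading with A_g ≠ 0 for all g (equivalently, the associated cocentral Hopf algebra map p : A → kΓ is surjective). If g ∈ Γ and y, z ∈ A satisfy x·y = x·z for all x ∈ A_g, then y = z. -/
/-!
Since `A_g ≠ 0` and `Δ(A_g) ⊆ A_g ⊗ A_g`, the counit identity `(ε ⊗ id) Δ = id` forces
`ε` to be nonzero on `A_g`, so after rescaling there is `a ∈ A_g` with `ε(a) = 1`. Writing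
`Δ(a) = ∑ a₁ ⊗ a₂` with `a₂ ∈ A_g`, the antipode axiom gives
`y = ε(a) y = ∑ S(a₁) a₂ y = ∑ S(a₁) a₂ z = ε(a) z = z`.
-/

open TensorProduct Coalgebra

namespace Submodule

variable {R C : Type*} [CommSemiring R] [AddCommMonoid C] [Module R C] [Coalgebra R C]

def IsSubcoalgebra (V : Submodule R C) : Prop :=
  ∀ a ∈ V, comul (R := R) a ∈ LinearMap.range (TensorProduct.map V.subtype V.subtype)

theorem IsSubcoalgebra.eq_bot_of_counit_comp_subtype_eq_zero {V : Submodule R C}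
    (hV : V.IsSubcoalgebra) (hε : counit ∘ₗ V.subtype = 0) : V = ⊥ := by
  refine (Submodule.eq_bot_iff V).mpr fun a ha => ?_
  obtain ⟨t, ht⟩ := hV a ha
  have hzero : counit.rTensor C (comul (R := R) a) = 0 := by
    rw [← ht, ← LinearMap.comp_apply, LinearMap.rTensor, ← TensorProduct.map_comp, hε,
      TensorProduct.map_zero_left, LinearMap.zero_apply]
  rw [rTensor_counit_comul] at hzero
  simpa using congrArg (TensorProduct.lid R C) hzero

theorem IsSubcoalgebra.exists_mem_counit_eq_one {K : Type*} [Field K] [Module K C]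
    [Coalgebra K C] {V : Submodule K C} (hV : V.IsSubcoalgebra) (hne : V ≠ ⊥) :
    ∃ a ∈ V, counit (R := K) a = 1 := by
  obtain ⟨b, hb, hεb⟩ : ∃ b ∈ V, counit (R := K) b ≠ 0 := by
    by_contra! hε
    exact hne <| hV.eq_bot_of_counit_comp_subtype_eq_zero <| LinearMap.ext fun x => hε x x.2
  exact ⟨(counit (R := K) b)⁻¹ • b, V.smul_mem _ hb, by
    rw [map_smul, smul_eq_mul, inv_mul_cancel₀ hεb]⟩

end Submodule

namespace HopfAlgebra

variable {R A : Type*} [CommSemiring R] [Semiring A] [HopfAlgebra R A]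

theorem eq_of_forall_mul_eq_mul_of_comul_mem_range {V : Submodule R A} {a y z : A}
    (hεa : counit (R := R) a = 1)
    (hΔa : comul (R := R) a ∈ LinearMap.range (TensorProduct.map V.subtype V.subtype))
    (h : ∀ x ∈ V, x * y = x * z) : y = z := by
  obtain ⟨t, ht⟩ := hΔa
  let φ : A → (V ⊗[R] V →ₗ[R] A) := fun w =>
    LinearMap.mulRight R w ∘ₗ LinearMap.mul' R A ∘ₗ (antipode R).rTensor A ∘ₗ
      TensorProduct.map V.subtype V.subtype
  have hφ : ∀ w, φ w t = w := fun w => by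
    simp only [φ, LinearMap.comp_apply, ht, mul_antipode_rTensor_comul_apply, hεa, map_one,
      LinearMap.mulRight_apply, one_mul]
  have hφyz : φ y = φ z := TensorProduct.ext' fun u v => by
    simp only [φ, LinearMap.comp_apply, TensorProduct.map_tmul, Submodule.coe_subtype,
      LinearMap.rTensor_tmul, LinearMap.mul'_apply, LinearMap.mulRight_apply, mul_assoc,
      h v v.2]
  rw [← hφ y, hφyz, hφ z]

end HopfAlgebra

theorem graded_component_separates_general
    (k : Type*) [Field k] (A : Type*) [Ring A] [HopfAlgebra k A]
    (Γ : Type*)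
    (𝒜 : Γ → Submodule k A)
    (hcomul : ∀ g : Γ, ∀ a ∈ 𝒜 g,
      Coalgebra.comul (R := k) a ∈
        LinearMap.range (TensorProduct.map (𝒜 g).subtype (𝒜 g).subtype))
    (hne : ∀ g : Γ, 𝒜 g ≠ ⊥) :
    ∀ (g : Γ) (y z : A), (∀ x ∈ 𝒜 g, x * y = x * z) → y = z := by
  intro g y z h
  obtain ⟨a, haV, hεa⟩ := Submodule.IsSubcoalgebra.exists_mem_counit_eq_one (hcomul g) (hne g)
  exact HopfAlgebra.eq_of_forall_mul_eq_mul_of_comul_mem_range hεa (hcomul g a haV) h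

/-- If `A` is a Hopf algebra with a cocentral grading `A = ⊕_{g∈Γ} A_g` such that every
component is nonzero (equivalently, the associated cocentral Hopf algebra map `A → kΓ` is
surjective), then multiplication by the whole component `A_g` separates points: if
`x * y = x * z` for all `x ∈ A_g` then `y = z`. -/
theorem graded_component_separates
    (k : Type*) [Field k] (A : Type*) [Ring A] [HopfAlgebra k A]
    (Γ : Type*) [Group Γ] [DecidableEq Γ]
    (𝒜 : Γ → Submodule k A)
    (hdirect : DirectSum.IsInternal 𝒜)
    (hone : (1 : A) ∈ 𝒜 1)
    (hmul : ∀ g h : Γ, ∀ a ∈ 𝒜 g, ∀ b ∈ 𝒜 h, a * b ∈ 𝒜 (g * h))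
    (hcomul : ∀ g : Γ, ∀ a ∈ 𝒜 g,
      Coalgebra.comul (R := k) a ∈
        LinearMap.range (TensorProduct.map (𝒜 g).subtype (𝒜 g).subtype))
    (hantipode : ∀ g : Γ, ∀ a ∈ 𝒜 g, HopfAlgebra.antipode (R := k) a ∈ 𝒜 g⁻¹)
    (hne : ∀ g : Γ, 𝒜 g ≠ ⊥) :
    ∀ (g : Γ) (y z : A), (∀ x ∈ 𝒜 g, x * y = x * z) → y = z :=
  graded_component_separates_general k A Γ 𝒜 hcomul hne
end

section
/- Let T be a central subgroup of a group G with H = G/T. If the natural actions of Aut(H) and Aut(T) on the second cohomology group H²(H, T) (with trivial H-action on T) are trivial, then the natural map Aut_T(G) → Aut(H) × Aut(T) is surjective. -/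
/-- A (normalized) 2-cocycle on `H` with values in `M` (trivial action). -/
def IsCocycle {H M : Type*} [Group H] [Group M] (τ : H → H → M) : Prop :=
  (∀ g h l : H, τ g h * τ (g * h) l = τ h l * τ g (h * l)) ∧
    (∀ g : H, τ 1 g = 1 ∧ τ g 1 = 1)

/-- Two 2-cocycles are cohomologous if they differ by a coboundary. -/
def Cohomologous {H M : Type*} [Group H] [Group M] (τ τ' : H → H → M) : Prop :=
  ∃ μ : H → M, μ 1 = 1 ∧ ∀ g h, τ' g h = μ g * μ h * (μ (g * h))⁻¹ * τ g h

/-! A normalized section `s` of `G → H` identifies `G` with `T × H` through `(t, x) ↦ t · s x`,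
the product becoming `(t, x) (t', y) = (t t' τ(x, y), x y)` for the associated cocycle `τ`.
By hypothesis `τ ∘ (θ × θ)` and `u ∘ τ` are both cohomologous to `τ`, hence to each other:
`u ∘ τ = δμ · τ ∘ (θ × θ)`. This identity is exactly what makes `(t, x) ↦ (u t · μ x, θ x)`
multiplicative. The resulting endomorphism of `G` induces the automorphisms `u` of `T` and `θ`
of `H`, so it is bijective by the five lemma. -/

namespace Cohomologous

variable {H M : Type*} [Group H] [CommGroup M] {τ τ' τ'' : H → H → M}

theorem symm (h : Cohomologous τ τ') : Cohomologous τ' τ := by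
  obtain ⟨μ, hμ1, hμ⟩ := h
  refine ⟨μ⁻¹, by simp [hμ1], fun g k => ?_⟩
  rw [hμ]
  apply Additive.ofMul.injective
  simp only [Pi.inv_apply, ofMul_mul, ofMul_inv]
  abel

theorem trans (h : Cohomologous τ τ') (h' : Cohomologous τ' τ'') : Cohomologous τ τ'' := by
  obtain ⟨μ, hμ1, hμ⟩ := h
  obtain ⟨μ', hμ'1, hμ'⟩ := h'
  refine ⟨μ' * μ, by simp [hμ1, hμ'1], fun g k => ?_⟩
  rw [hμ', hμ]
  apply Additive.ofMul.injective
  simp only [Pi.mul_apply, ofMul_mul, ofMul_inv]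
  abel

end Cohomologous

namespace QuotientGroup

variable {G : Type*} [Group G] (N : Subgroup G) [N.Normal]

open Classical in
noncomputable def normalizedSection : G ⧸ N → G :=
  fun x => if x = 1 then 1 else x.out

@[simp]
theorem normalizedSection_one : normalizedSection N (1 : G ⧸ N) = 1 := if_pos rfl

@[simp]
theorem mk_normalizedSection (x : G ⧸ N) : ((normalizedSection N x : G) : G ⧸ N) = x := by
  by_cases hx : x = 1
  · simp [hx]
  · simp only [normalizedSection, if_neg hx, out_eq']

theorem mk_mul_normalizedSection {n : G} (hn : n ∈ N) (x : G ⧸ N) :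
    ((n * normalizedSection N x : G) : G ⧸ N) = x := by
  rw [mk_mul, (eq_one_iff n).mpr hn, one_mul, mk_normalizedSection]

end QuotientGroup

namespace CentralExtension

open QuotientGroup

variable {G T : Type*} [Group G] [CommGroup T] {ι : T →* G} [ι.range.Normal]

theorem bijective_of_induces_mulEquivs (hι : Function.Injective ι) (f : G →* G)
    (θ : MulAut (G ⧸ ι.range)) (u : MulAut T)
    (hf_mk : ∀ g : G, (f g : G ⧸ ι.range) = θ g) (hf_ι : ∀ t, f (ι t) = ι (u t)) :
    Function.Bijective f := by
  have exact_one_ι : Function.MulExact (1 : Unit →* T) ι := fun t => by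
    simp [map_eq_one_iff ι hι, eq_comm]
  have exact_ι_mk : Function.MulExact ι (mk' ι.range) := fun g => eq_one_iff g
  have exact_mk_one : Function.MulExact (mk' ι.range) (1 : G ⧸ ι.range →* Unit) := fun _ => by
    simp
  -- the ladder from `1 → T → G → G ⧸ ι.range → 1` to itself with rungs `1, u, f, θ, 1`
  exact MonoidHom.bijective_of_surjective_of_bijective_of_bijective_of_injective
    1 ι (mk' ι.range) 1 1 ι (mk' ι.range) 1 1 u.toMonoidHom f θ.toMonoidHom 1
    (by ext; simp) (MonoidHom.ext fun t => (hf_ι t).symm) (MonoidHom.ext hf_mk)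
    (by ext) exact_one_ι exact_ι_mk exact_mk_one exact_one_ι exact_ι_mk exact_mk_one
    (fun _ => ⟨(), rfl⟩) u.bijective θ.bijective (fun _ _ _ => rfl)

@[simp]
theorem mk_ι_mul_normalizedSection (t : T) (x : G ⧸ ι.range) :
    ((ι t * normalizedSection ι.range x : G) : G ⧸ ι.range) = x :=
  mk_mul_normalizedSection _ (ι.mem_range.mpr ⟨t, rfl⟩) x

variable (hι : Function.Injective ι)

noncomputable def coordEquiv : T × (G ⧸ ι.range) ≃ G :=
  Equiv.ofBijective (fun p => ι p.1 * normalizedSection ι.range p.2) <| by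
    refine ⟨fun ⟨t, x⟩ ⟨t', y⟩ h => ?_, fun g => ?_⟩
    · have hxy : x = y := by
        simpa only [mk_ι_mul_normalizedSection] using congrArg ((↑) : G → G ⧸ ι.range) h
      subst hxy
      exact Prod.ext (hι (mul_right_cancel h)) rfl
    · obtain ⟨t, ht⟩ : g * (normalizedSection ι.range g)⁻¹ ∈ ι.range := by
        rw [← eq_one_iff, mk_mul, mk_inv, mk_normalizedSection, mul_inv_cancel]
      exact ⟨(t, g), by simp [ht]⟩

theorem coordEquiv_apply (p : T × (G ⧸ ι.range)) :
    coordEquiv hι p = ι p.1 * normalizedSection ι.range p.2 := rfl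

@[simp]
theorem mk_coordEquiv (p : T × (G ⧸ ι.range)) : (coordEquiv hι p : G ⧸ ι.range) = p.2 :=
  mk_ι_mul_normalizedSection p.1 p.2

@[simp]
theorem coordEquiv_symm_snd (g : G) : ((coordEquiv hι).symm g).2 = g := by
  conv_rhs => rw [← (coordEquiv hι).apply_symm_apply g]
  rw [mk_coordEquiv]

theorem ι_eq_coordEquiv (t : T) : ι t = coordEquiv hι (t, 1) := by
  simp [coordEquiv_apply]

theorem normalizedSection_eq_coordEquiv (x : G ⧸ ι.range) :
    normalizedSection ι.range x = coordEquiv hι (1, x) := by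
  simp [coordEquiv_apply]

noncomputable def cocycle (x y : G ⧸ ι.range) : T :=
  ((coordEquiv hι).symm (normalizedSection ι.range x * normalizedSection ι.range y)).1

theorem normalizedSection_mul_normalizedSection (x y : G ⧸ ι.range) :
    normalizedSection ι.range x * normalizedSection ι.range y =
      coordEquiv hι (cocycle hι x y, x * y) := by
  apply (coordEquiv hι).symm.injective
  rw [Equiv.symm_apply_apply]
  exact Prod.ext rfl (by simp)

theorem coordEquiv_mul (hcent : ι.range ≤ Subgroup.center G) (t t' : T) (x y : G ⧸ ι.range) :
    coordEquiv hι (t, x) * coordEquiv hι (t', y) =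
      coordEquiv hι (t * t' * cocycle hι x y, x * y) := by
  have hcomm : normalizedSection ι.range x * ι t' = ι t' * normalizedSection ι.range x :=
    Subgroup.mem_center_iff.mp (hcent ⟨t', rfl⟩) _
  calc ι t * normalizedSection ι.range x * (ι t' * normalizedSection ι.range y)
        = ι t * ι t' * (normalizedSection ι.range x * normalizedSection ι.range y) := by
        rw [mul_assoc, ← mul_assoc (normalizedSection ι.range x), hcomm]; group
    _ = ι (t * t' * cocycle hι x y) * normalizedSection ι.range (x * y) := by
        rw [normalizedSection_mul_normalizedSection hι, coordEquiv_apply, map_mul, map_mul]; group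

theorem isCocycle_cocycle (hcent : ι.range ≤ Subgroup.center G) : IsCocycle (cocycle hι) := by
  set s := normalizedSection ι.range
  refine ⟨fun x y z => ?_, fun x => ⟨?_, ?_⟩⟩
  · have h := congrArg (fun g => ((coordEquiv hι).symm g).1) (mul_assoc (s x) (s y) (s z))
    simpa [s, normalizedSection_eq_coordEquiv hι, coordEquiv_mul hι hcent] using h
  · have h := normalizedSection_mul_normalizedSection hι 1 x
    rw [normalizedSection_one, one_mul, one_mul, normalizedSection_eq_coordEquiv hι] at h
    exact (congrArg Prod.fst ((coordEquiv hι).injective h)).symm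
  · have h := normalizedSection_mul_normalizedSection hι x 1
    rw [normalizedSection_one, mul_one, mul_one, normalizedSection_eq_coordEquiv hι] at h
    exact (congrArg Prod.fst ((coordEquiv hι).injective h)).symm

theorem exists_monoidHom_of_cohomologous (hcent : ι.range ≤ Subgroup.center G)
    (θ : G ⧸ ι.range →* G ⧸ ι.range) (u : T →* T)
    (h : Cohomologous (fun x y => cocycle hι (θ x) (θ y)) (fun x y => u (cocycle hι x y))) :
    ∃ f : G →* G, (∀ g : G, (f g : G ⧸ ι.range) = θ g) ∧ ∀ t, f (ι t) = ι (u t) := by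
  obtain ⟨μ, hμ1, hμ⟩ := h
  set e := coordEquiv hι
  let F : T × (G ⧸ ι.range) → T × (G ⧸ ι.range) := fun p => (u p.1 * μ p.2, θ p.2)
  have F_mul : ∀ a b, e (F (e.symm (a * b))) = e (F (e.symm a)) * e (F (e.symm b)) := by
    intro a b
    obtain ⟨⟨t, x⟩, rfl⟩ := e.surjective a
    obtain ⟨⟨t', y⟩, rfl⟩ := e.surjective b
    simp only [e, coordEquiv_mul hι hcent, Equiv.symm_apply_apply, F, map_mul, hμ]
    congr 2
    apply Additive.ofMul.injective
    simp only [ofMul_mul, ofMul_inv]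
    abel
  refine ⟨MonoidHom.mk' (e ∘ F ∘ e.symm) F_mul, fun g => ?_, fun t => ?_⟩
  · simp [e, F]
  · simp [e, F, ι_eq_coordEquiv hι, hμ1]

end CentralExtension

open CentralExtension in
/-- Let `T` be a central subgroup of `G` (realized by an injective hom `ι : T → G` with
central range) and `H = G/T`. If the natural actions of `Aut(H)` and `Aut(T)` on
`H²(H, T)` (trivial coefficients) are trivial, then the natural map
`Aut_T(G) → Aut(H) × Aut(T)` is surjective: every pair `(θ, u)` is induced by an
automorphism `f` of `G` preserving `T`. -/
theorem autT_to_autQuotient_prod_autT_surjective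
    (G : Type*) [Group G] (T : Type*) [CommGroup T]
    (ι : T →* G) (hι : Function.Injective ι)
    (hcent : ι.range ≤ Subgroup.center G) [ι.range.Normal]
    (hAutH : ∀ τ : (G ⧸ ι.range) → (G ⧸ ι.range) → T, IsCocycle τ →
      ∀ θ : MulAut (G ⧸ ι.range), Cohomologous τ (fun x y => τ (θ x) (θ y)))
    (hAutT : ∀ τ : (G ⧸ ι.range) → (G ⧸ ι.range) → T, IsCocycle τ →
      ∀ u : MulAut T, Cohomologous τ (fun x y => u (τ x y))) :
    ∀ (θ : MulAut (G ⧸ ι.range)) (u : MulAut T),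
      ∃ f : MulAut G,
        (∀ x : G, (QuotientGroup.mk (f x) : G ⧸ ι.range) = θ (QuotientGroup.mk x)) ∧
        (∀ t : T, f (ι t) = ι (u t)) := by
  intro θ u
  have hτ := isCocycle_cocycle hι hcent
  obtain ⟨f, hf_mk, hf_ι⟩ := exists_monoidHom_of_cohomologous hι hcent θ.toMonoidHom u.toMonoidHom
    ((hAutH _ hτ θ).symm.trans (hAutT _ hτ u))
  exact ⟨MulEquiv.ofBijective f (bijective_of_induces_mulEquivs hι f θ u hf_mk hf_ι), hf_mk, hf_ι⟩
end

section
/- Let n ≥ 2 be even and ω ∈ k^× with ω^n = 1, where k is a field. The map τ_ω : D_n × D_n → k^× defined by τ_ω(r^i s^j, r^k s^l) = ω^{jk} (for 0 ≤ i,k < n and j,l ∈ {0,1}) is a 2-cocycle on the dihedral group D_n with trivial coefficients. -/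
/-- The map `τ_ω` on the dihedral group `D_n`, given on elements written `r^i s^j` by
`τ_ω(r^i s^j, r^k s^l) = ω^{jk}`. (In terms of the generators `r i` and `sr i = s r^i`
of `DihedralGroup n`, note `r^k s = sr (-k)`.) -/
def tauOmega {K : Type*} [Field K] (n : ℕ) (ω : Kˣ) :
    DihedralGroup n → DihedralGroup n → Kˣ := fun g h =>
  match g, h with
  | DihedralGroup.r _, _ => 1
  | DihedralGroup.sr _, DihedralGroup.r m => ω ^ m.val
  | DihedralGroup.sr _, DihedralGroup.sr m => ω ^ (-m).val

/-
`τ_ω(g, h) = χ(k)^j`, where `g` has reflection bit `j` and `h` has rotation part `k`, and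
`χ : ZMod n → Kˣ`, `k ↦ ω^k`, is a character because `ω^n = 1`. Every instance of the cocycle
identity therefore reduces to `χ(a + b) = χ(a) χ(b)`.
-/

theorem pow_zmod_val_add {M : Type*} [Monoid M] {n : ℕ} [NeZero n] {ω : M} (hω : ω ^ n = 1)
    (a b : ZMod n) : ω ^ (a + b).val = ω ^ a.val * ω ^ b.val := by
  rw [ZMod.val_add, ← pow_eq_pow_mod _ hω, pow_add]

section

variable {K : Type*} [Field K] {n : ℕ} {ω : Kˣ}

open DihedralGroup

@[simp] theorem tauOmega_r (i : ZMod n) (h : DihedralGroup n) : tauOmega n ω (r i) h = 1 := rfl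

@[simp] theorem tauOmega_sr_r (i j : ZMod n) : tauOmega n ω (sr i) (r j) = ω ^ j.val := rfl

@[simp] theorem tauOmega_sr_sr (i j : ZMod n) : tauOmega n ω (sr i) (sr j) = ω ^ (-j).val := rfl

theorem tauOmega_one_left (g : DihedralGroup n) : tauOmega n ω 1 g = 1 := rfl

theorem tauOmega_one_right (g : DihedralGroup n) : tauOmega n ω g 1 = 1 := by
  cases g <;> simp [one_def, -r_zero]

theorem tauOmega_mul_tauOmega_mul [NeZero n] (hω : ω ^ n = 1)
    (g h l : DihedralGroup n) :
    tauOmega n ω g h * tauOmega n ω (g * h) l = tauOmega n ω h l * tauOmega n ω g (h * l) := by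
  rcases g with i | i <;> rcases h with j | j <;> rcases l with m | m <;>
    simp only [r_mul_r, r_mul_sr, sr_mul_r, sr_mul_sr, tauOmega_r, tauOmega_sr_r, tauOmega_sr_sr,
      one_mul, mul_one]
  all_goals rw [← pow_zmod_val_add hω] <;> ring_nf

end

theorem tauOmega_isCocycle_general {K : Type*} [Field K] (n : ℕ) (hn : 2 ≤ n)
    (ω : Kˣ) (hω : ω ^ n = 1) : IsCocycle (tauOmega n ω) := by
  have : NeZero n := ⟨by omega⟩
  exact ⟨tauOmega_mul_tauOmega_mul hω, fun g => ⟨tauOmega_one_left g, tauOmega_one_right g⟩⟩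

/-- For `n ≥ 2` even and `ω` an `n`-th root of unity, `τ_ω` is a 2-cocycle on `D_n`
with trivial coefficients. -/
theorem tauOmega_isCocycle {K : Type*} [Field K] (n : ℕ) (hn : 2 ≤ n) (heven : Even n)
    (ω : Kˣ) (hω : ω ^ n = 1) : IsCocycle (tauOmega n ω) :=
  tauOmega_isCocycle_general n hn ω hω
end

section
/- Let n ≥ 2 be even and k a field. A 2-cocycle β ∈ Z²(D_n, k^×) on the dihedral group D_n (trivial coefficients) is a coboundary if and only if there exist x, y ∈ k^× with x^n = β(r,r)β(r,r²)⋯β(r,r^{n-1}), y² = β(s,s), and x² = β(r,r^{n-1}) β(r^{n-1},s)⁻¹ β(s,r). -/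
open DihedralGroup

/-- A 2-cocycle is a coboundary if it is the differential of some `μ` with `μ(1) = 1`. -/
def IsCoboundary {H M : Type*} [Group H] [Group M] (τ : H → H → M) : Prop :=
  ∃ μ : H → M, μ 1 = 1 ∧ ∀ g h, τ g h = μ g * μ h * (μ (g * h))⁻¹

/-!
On a coboundary `∂μ` the three functionals `β ↦ ∏ β(r, rⁱ)`, `β ↦ β(s, s)` and
`β ↦ β(r, r⁻¹) β(r⁻¹, s)⁻¹ β(s, r)` take the values `μ(r)ⁿ`, `μ(s)²` and `μ(r)²`; this gives
`x = μ(r)`, `y = μ(s)`.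

Conversely, define `μ(r^m) = x^m / ∏_{j<m} β(r, rʲ)` for `m < n` and `μ(srⁱ) = y μ(rⁱ) / β(s, rⁱ)`.
Then `γ = β / ∂μ` is a cocycle with `γ(r, r^m) = 1` for `m < n - 1` and `γ(s, rⁱ) = 1`, and since
the functionals are multiplicative, the hypotheses on `x, y` make them trivial on `γ`, which forces
`γ(r, r⁻¹) = γ(s, s) = γ(r⁻¹, s) = 1`. By the cocycle identity the elements `a` with
`γ(a, -) = 1` form a submonoid; from these values it contains `r` and `s`, hence it is all of `D_n`.
-/

open Finset

def cochainEval {G M : Type*} [MulOneClass M] (g h : G) : (G → G → M) →* M :=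
  (Pi.evalMonoidHom (fun _ : G => M) h).comp (Pi.evalMonoidHom (fun _ : G => G → M) g)

@[simp]
theorem cochainEval_apply {G M : Type*} [MulOneClass M] (g h : G) (β : G → G → M) :
    cochainEval g h β = β g h := rfl

section LeftKernel

variable {G M : Type*} [Group G] [Group M]

def IsCocycle.leftKernel {γ : G → G → M} (hγ : IsCocycle γ) : Submonoid G where
  carrier := {g | ∀ h, γ g h = 1}
  one_mem' h := (hγ.2 h).1
  mul_mem' {a b} ha hb l := by simpa [ha b, hb l, ha (b * l)] using hγ.1 a b l

theorem IsCocycle.eq_one_of_closure_eq_top {γ : G → G → M} (hγ : IsCocycle γ) {S : Set G}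
    (hS : Submonoid.closure S = ⊤) (h : ∀ a ∈ S, ∀ g, γ a g = 1) : γ = 1 := by
  have hker : hγ.leftKernel = ⊤ := eq_top_iff.2 (hS ▸ Submonoid.closure_le.2 h)
  funext g g'
  exact (hker ▸ Submonoid.mem_top g : g ∈ hγ.leftKernel) g'

end LeftKernel

section Coboundary

variable {G M : Type*} [Group G] [CommGroup M]

def coboundary (μ : G → M) : G → G → M := fun g h => μ g * μ h * (μ (g * h))⁻¹

theorem isCoboundary_iff {β : G → G → M} :
    IsCoboundary β ↔ ∃ μ : G → M, μ 1 = 1 ∧ β = coboundary μ := by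
  simp only [IsCoboundary, funext_iff, coboundary]

theorem isCocycle_coboundary {μ : G → M} (hμ : μ 1 = 1) : IsCocycle (coboundary μ) := by
  refine ⟨fun g h l => ?_, fun g => by simp [coboundary, hμ]⟩
  apply Additive.ofMul.injective
  simp only [coboundary, mul_assoc, ofMul_mul, ofMul_inv]
  abel

theorem IsCocycle.div {β γ : G → G → M} (hβ : IsCocycle β) (hγ : IsCocycle γ) :
    IsCocycle (β / γ) := by
  refine ⟨fun g h l => ?_, fun g => by simp [(hβ.2 g).1, (hβ.2 g).2, (hγ.2 g).1, (hγ.2 g).2]⟩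
  simp only [Pi.div_apply, div_mul_div_comm, hβ.1 g h l, hγ.1 g h l]

theorem div_coboundary_apply_eq_one_iff {β : G → G → M} {μ : G → M} {g h : G} :
    (β / coboundary μ) g h = 1 ↔ β g h * μ (g * h) = μ g * μ h := by
  rw [Pi.div_apply, Pi.div_apply, div_eq_one, coboundary, eq_mul_inv_iff_mul_eq]

end Coboundary

namespace DihedralGroup

variable {n : ℕ}

theorem closure_r_one_sr_zero [NeZero n] :
    Submonoid.closure {r 1, sr 0} = (⊤ : Submonoid (DihedralGroup n)) := by
  set S := Submonoid.closure ({r 1, sr 0} : Set (DihedralGroup n))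
  have hr : ∀ i : ZMod n, r i ∈ S := fun i => by
    simpa [r_one_pow] using S.pow_mem (Submonoid.subset_closure (Set.mem_insert _ _)) i.val
  refine eq_top_iff.2 fun g _ => ?_
  rcases g with i | i
  · exact hr i
  · simpa using S.mul_mem (Submonoid.subset_closure (Set.mem_insert_of_mem _ rfl)) (hr i)

variable {M : Type*} [CommGroup M]

def rotationInvariant : (DihedralGroup n → DihedralGroup n → M) →* M :=
  ∏ i ∈ Icc 1 (n - 1), cochainEval (r 1) (r i)

def reflectionInvariant : (DihedralGroup n → DihedralGroup n → M) →* M :=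
  cochainEval (sr 0) (sr 0)

def mixedInvariant : (DihedralGroup n → DihedralGroup n → M) →* M :=
  cochainEval (r 1) (r (-1)) * (cochainEval (r (-1)) (sr 0))⁻¹ * cochainEval (sr 0) (r 1)

theorem rotationInvariant_apply (β : DihedralGroup n → DihedralGroup n → M) :
    rotationInvariant β = ∏ i ∈ Icc 1 (n - 1), β (r 1) (r i) := by
  simp [rotationInvariant, MonoidHom.finsetProd_apply]

theorem reflectionInvariant_apply (β : DihedralGroup n → DihedralGroup n → M) :
    reflectionInvariant β = β (sr 0) (sr 0) := rfl

theorem mixedInvariant_apply (β : DihedralGroup n → DihedralGroup n → M) :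
    mixedInvariant β = β (r 1) (r (-1)) * (β (r (-1)) (sr 0))⁻¹ * β (sr 0) (r 1) := rfl

theorem rotationInvariant_coboundary [NeZero n] {μ : DihedralGroup n → M} (hμ : μ 1 = 1) :
    rotationInvariant (coboundary μ) = μ (r 1) ^ n := by
  have hIcc : Icc 1 (n - 1) = Ico 1 n := by
    rw [← Finset.Ico_add_one_right_eq_Icc, Nat.sub_add_cancel NeZero.one_le]
  have hrn : μ (r (n : ZMod n)) = 1 := by rw [ZMod.natCast_self, ← one_def, hμ]
  calc rotationInvariant (coboundary μ)
      = ∏ i ∈ Ico 1 n, μ (r 1) * (μ (r ((i + 1 : ℕ) : ZMod n)) / μ (r (i : ZMod n)))⁻¹ := by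
        rw [rotationInvariant_apply, hIcc]
        refine prod_congr rfl fun i _ => ?_
        simp [coboundary, r_mul_r, add_comm, div_eq_mul_inv, mul_assoc]
    _ = μ (r 1) ^ (n - 1) * (μ (r (n : ZMod n)) / μ (r 1))⁻¹ := by
        rw [prod_mul_distrib, prod_const, Nat.card_Ico, prod_inv_distrib,
          prod_Ico_div (fun i => μ (r (i : ZMod n))) NeZero.one_le, Nat.cast_one]
    _ = μ (r 1) ^ n := by
        rw [hrn, one_div, inv_inv, ← pow_succ, Nat.sub_add_cancel NeZero.one_le]

theorem reflectionInvariant_coboundary {μ : DihedralGroup n → M} (hμ : μ 1 = 1) :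
    reflectionInvariant (coboundary μ) = μ (sr 0) ^ 2 := by
  simp [reflectionInvariant_apply, coboundary, sr_mul_sr, hμ, sq]

theorem mixedInvariant_coboundary {μ : DihedralGroup n → M} (hμ : μ 1 = 1) :
    mixedInvariant (coboundary μ) = μ (r 1) ^ 2 := by
  simp only [mixedInvariant_apply, coboundary, r_mul_r, r_mul_sr, sr_mul_r, add_neg_cancel,
    sub_neg_eq_add, zero_add, ← one_def, hμ, inv_one, mul_one]
  apply Additive.ofMul.injective
  simp only [ofMul_mul, ofMul_inv, ofMul_pow]
  abel

variable {γ : DihedralGroup n → DihedralGroup n → M}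

theorem cocycle_eq_one_of_generators [NeZero n] (hγ : IsCocycle γ)
    (hr : ∀ i, γ (r 1) (r i) = 1) (hs : ∀ i, γ (sr 0) (r i) = 1)
    (hss : γ (sr 0) (sr 0) = 1) (hrs : γ (r (-1)) (sr 0) = 1) : γ = 1 := by
  have hrot : ∀ i j, γ (r i) (r j) = 1 := by
    suffices ∀ (m : ℕ) j, γ (r m) (r j) = 1 from fun i j => by simpa using this i.val j
    intro m
    induction m with
    | zero => simpa [← one_def] using fun j => (hγ.2 (r j)).1
    | succ m ih =>
      intro j
      simpa [r_mul_r, hr, ih, add_comm, add_left_comm] using hγ.1 (r 1) (r m) (r j)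
  have hsr : ∀ j, γ (sr 0) (sr j) = 1 := fun j => by
    simpa [sr_mul_sr, ← one_def, hγ.2, hss, hs, sr_mul_r] using (hγ.1 (sr 0) (sr 0) (r j)).symm
  have hsr_neg : ∀ j, γ (sr (-1)) (r j) = 1 := fun j => by
    simpa [sr_mul_r, hs, hrot] using hγ.1 (sr 0) (r (-1)) (r j)
  have hr_sr : ∀ j, γ (r 1) (sr j) = γ (r 1) (sr 0) := fun j => by
    simpa [r_mul_sr, sr_mul_r, hsr_neg, hs] using (hγ.1 (r 1) (sr 0) (r j)).symm
  have hr_sr_one : γ (r 1) (sr 1) = 1 := by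
    simpa [r_mul_r, r_mul_sr, ← one_def, hγ.2, hr, hrs] using (hγ.1 (r 1) (r (-1)) (sr 0)).symm
  refine IsCocycle.eq_one_of_closure_eq_top hγ closure_r_one_sr_zero ?_
  rintro a (rfl | rfl) (j | j)
  · exact hr j
  · rw [hr_sr, ← hr_sr 1, hr_sr_one]
  · exact hs j
  · exact hsr j

theorem cocycle_eq_one_of_invariants [Fact (1 < n)] (hγ : IsCocycle γ)
    (hr : ∀ m : ℕ, m + 1 < n → γ (r 1) (r m) = 1) (hs : ∀ i, γ (sr 0) (r i) = 1)
    (h₁ : rotationInvariant γ = 1) (h₂ : reflectionInvariant γ = 1)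
    (h₃ : mixedInvariant γ = 1) : γ = 1 := by
  obtain ⟨k, rfl⟩ : ∃ k, n = k + 2 := ⟨n - 2, by have := Fact.out (p := 1 < n); omega⟩
  have hr_neg : γ (r 1) (r (-1)) = 1 := by
    rw [← ZMod.natCast_zmod_val (-1 : ZMod (k + 2)), ZMod.val_neg_one]
    rwa [rotationInvariant_apply, show k + 2 - 1 = k + 1 by omega, prod_Icc_succ_top (by omega),
      prod_eq_one fun m hm => hr m (by grind), one_mul] at h₁
  have hr_all : ∀ i, γ (r 1) (r i) = 1 := by
    intro i
    obtain h | h := lt_or_ge (i.val + 1) (k + 2)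
    · simpa using hr i.val h
    · rwa [show i = -1 from ZMod.val_injective _ (by rw [ZMod.val_neg_one]; grind [ZMod.val_lt])]
  refine cocycle_eq_one_of_generators hγ hr_all hs h₂ ?_
  simpa [mixedInvariant_apply, hr_neg, hs] using h₃

def rotationCochain (β : DihedralGroup n → DihedralGroup n → M) (x : M) (m : ℕ) : M :=
  x ^ m * (∏ j ∈ range m, β (r 1) (r j))⁻¹

theorem rotationCochain_succ_mul (β : DihedralGroup n → DihedralGroup n → M) (x : M) (m : ℕ) :
    β (r 1) (r m) * rotationCochain β x (m + 1) = x * rotationCochain β x m := by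
  simp only [rotationCochain, prod_range_succ, pow_succ, mul_inv]
  apply Additive.ofMul.injective
  simp only [ofMul_mul, ofMul_inv]
  abel

def dihedralCochain (β : DihedralGroup n → DihedralGroup n → M) (x y : M) :
    DihedralGroup n → M
  | r i => rotationCochain β x i.val
  | sr i => y * rotationCochain β x i.val * (β (sr 0) (r i))⁻¹

theorem isCoboundary_of_invariants [Fact (1 < n)] {β : DihedralGroup n → DihedralGroup n → M}
    (hβ : IsCocycle β) (x y : M) (hx : rotationInvariant β = x ^ n)
    (hy : reflectionInvariant β = y ^ 2) (hxy : mixedInvariant β = x ^ 2) : IsCoboundary β := by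
  set μ := dihedralCochain β x y
  have hμ1 : μ 1 = 1 := by
    show rotationCochain β x (0 : ZMod n).val = 1
    simp [rotationCochain]
  have hμr : μ (r 1) = x := by
    simp [μ, dihedralCochain, rotationCochain, ZMod.val_one, (hβ.2 _).2]
  have hμs : μ (sr 0) = y := by
    simp [μ, dihedralCochain, rotationCochain, (hβ.2 _).2]
  refine isCoboundary_iff.2 ⟨μ, hμ1, div_eq_one.1 ?_⟩
  refine cocycle_eq_one_of_invariants (hβ.div (isCocycle_coboundary hμ1)) (fun m hm => ?_)
    (fun i => ?_) ?_ ?_ ?_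
  · have hval : ∀ k : ℕ, k < n → μ (r k) = rotationCochain β x k := fun k hk => by
      simp [μ, dihedralCochain, ZMod.val_cast_of_lt hk]
    rw [div_coboundary_apply_eq_one_iff, r_mul_r, hμr,
      show (1 : ZMod n) + m = (m + 1 : ℕ) by push_cast; ring, hval _ hm, hval _ (by omega),
      rotationCochain_succ_mul]
  · rw [div_coboundary_apply_eq_one_iff, sr_mul_r, zero_add, hμs]
    simp [μ, dihedralCochain, mul_comm, mul_left_comm]
  · rw [map_div, hx, rotationInvariant_coboundary hμ1, hμr, div_self']
  · rw [map_div, hy, reflectionInvariant_coboundary hμ1, hμs, div_self']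
  · rw [map_div, hxy, mixedInvariant_coboundary hμ1, hμr, div_self']

end DihedralGroup

theorem dihedral_cocycle_coboundary_iff_general {K : Type*} [Field K]
    (n : ℕ) (hn : 2 ≤ n)
    (β : DihedralGroup n → DihedralGroup n → Kˣ) (hβ : IsCocycle β) :
    IsCoboundary β ↔
      ∃ x y : Kˣ,
        x ^ n = ∏ i ∈ Finset.Icc 1 (n - 1), β (r 1) (r (i : ZMod n)) ∧
        y ^ 2 = β (sr 0) (sr 0) ∧
        x ^ 2 = β (r 1) (r (-1)) * (β (r (-1)) (sr 0))⁻¹ * β (sr 0) (r 1) := by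
  have : Fact (1 < n) := ⟨hn⟩
  simp only [← rotationInvariant_apply, ← reflectionInvariant_apply, ← mixedInvariant_apply]
  constructor
  · intro h
    obtain ⟨μ, hμ, rfl⟩ := isCoboundary_iff.1 h
    exact ⟨μ (r 1), μ (sr 0), (rotationInvariant_coboundary hμ).symm,
      (reflectionInvariant_coboundary hμ).symm, (mixedInvariant_coboundary hμ).symm⟩
  · rintro ⟨x, y, hx, hy, hxy⟩
    exact isCoboundary_of_invariants hβ x y hx.symm hy.symm hxy.symm

/-- Triviality test for 2-cocycles on the dihedral group `D_n` (`n` even): a normalized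
2-cocycle `β` with values in `kˣ` is a coboundary iff there exist `x, y ∈ kˣ` with
`x^n = β(r,r)β(r,r²)⋯β(r,r^{n-1})`, `y² = β(s,s)` and
`x² = β(r,r^{n-1}) β(r^{n-1},s)⁻¹ β(s,r)`. -/
theorem dihedral_cocycle_coboundary_iff {K : Type*} [Field K]
    (n : ℕ) (hn : 2 ≤ n) (heven : Even n)
    (β : DihedralGroup n → DihedralGroup n → Kˣ) (hβ : IsCocycle β) :
    IsCoboundary β ↔
      ∃ x y : Kˣ,
        x ^ n = ∏ i ∈ Finset.Icc 1 (n - 1), β (r 1) (r (i : ZMod n)) ∧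
        y ^ 2 = β (sr 0) (sr 0) ∧
        x ^ 2 = β (r 1) (r (-1)) * (β (r (-1)) (sr 0))⁻¹ * β (sr 0) (r 1) :=
  dihedral_cocycle_coboundary_iff_general n hn β hβ
end

section
/- Let n = p^r with p an odd prime and r ≥ 1. Then Aut(D_n) contains exactly one conjugacy class of elements of order 2, represented by the automorphism Ψ_{0,-1} defined by r ↦ r⁻¹, s ↦ s. -/
open DihedralGroup

/-- `f` is the automorphism `Ψ_{k,l}` of `D_n`: `r^i ↦ r^{l i}`, `s r^i ↦ s r^{k + l i}`. -/
def IsPsi (n : ℕ) (k l : ZMod n) (f : MulAut (DihedralGroup n)) : Prop :=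
  (∀ i : ZMod n, f (r i) = r (l * i)) ∧ (∀ i : ZMod n, f (sr i) = sr (k + l * i))

namespace DihedralAux

lemma inv_r {n : ℕ} (i : ZMod n) : (r i : DihedralGroup n)⁻¹ = r (-i) := rfl

lemma r_pow {n : ℕ} (a : ZMod n) (k : ℕ) : (r a : DihedralGroup n) ^ k = r ((k : ZMod n) * a) := by
  induction k with
  | zero => simp [one_def, -r_zero]
  | succ k ih =>
    rw [pow_succ, ih, r_mul_r]
    congr 1
    push_cast
    ring

/-- The automorphism `Ψ_{0,-1}`. -/
def psiNeg (n : ℕ) : MulAut (DihedralGroup n) where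
  toFun x := match x with | .r i => r (-i) | .sr i => sr (-i)
  invFun x := match x with | .r i => r (-i) | .sr i => sr (-i)
  left_inv := by rintro (i | i) <;> simp
  right_inv := by rintro (i | i) <;> simp
  map_mul' := by
    rintro (i | i) (j | j) <;>
      simp only [r_mul_r, r_mul_sr, sr_mul_r, sr_mul_sr] <;> congr 1 <;> ring

lemma psiNeg_isPsi (n : ℕ) : IsPsi n 0 (-1) (psiNeg n) :=
  ⟨fun i => by show r (-i) = _; congr 1; ring,
   fun i => by show sr (-i) = _; congr 1; ring⟩

/-- Every automorphism of `D_n` (`n` odd) has the form `Ψ_{k,l}`. -/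
lemma aut_form {n : ℕ} [NeZero n] (hodd : Odd n) (f : MulAut (DihedralGroup n)) :
    ∃ k l : ZMod n, IsPsi n k l f := by
  have hne2 : n ≠ 2 := by rintro rfl; simp [Nat.odd_iff] at hodd
  obtain ⟨l, hl⟩ : ∃ l, f (r 1) = r l := by
    rcases h : f (r 1) with l | l
    · exact ⟨l, rfl⟩
    · have h2 := f.orderOf_eq (r 1)
      rw [h, orderOf_sr, orderOf_r_one] at h2
      exact absurd h2.symm hne2
  obtain ⟨k, hk⟩ : ∃ k, f (sr 0) = sr k := by
    rcases h : f (sr 0) with j | j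
    · exfalso
      have h2 : orderOf (r j : DihedralGroup n) = 2 := by
        rw [← h, f.orderOf_eq, orderOf_sr]
      have hsq : (r j : DihedralGroup n) ^ 2 = 1 := by
        rw [← h2]; exact pow_orderOf_eq_one _
      rw [sq, r_mul_r, one_def] at hsq
      have hj : j + j = 0 := by injection hsq
      have hj0 := (ZMod.add_self_eq_zero_iff_eq_zero hodd).mp hj
      subst hj0
      rw [← one_def, orderOf_one] at h2
      omega
    · exact ⟨j, rfl⟩
  have hr : ∀ i : ZMod n, f (r i) = r (l * i) := by
    intro i
    have hi : (r i : DihedralGroup n) = (r 1) ^ i.val := by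
      rw [r_one_pow, ZMod.natCast_zmod_val]
    rw [hi, map_pow, hl, r_pow]
    congr 1
    rw [ZMod.natCast_zmod_val]
    ring
  refine ⟨k, l, hr, fun i => ?_⟩
  have hi : (sr i : DihedralGroup n) = sr 0 * r i := by rw [sr_mul_r, zero_add]
  rw [hi, map_mul, hk, hr, sr_mul_r]

/-- Square roots of 1 in `ZMod (p^r)`, `p` an odd prime. -/
lemma sq_root {p t : ℕ} (hp : p.Prime) (hodd : Odd p) (ht : 1 ≤ t) {l : ZMod (p ^ t)}
    (hl : l * l = 1) : l = 1 ∨ l = -1 := by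
  haveI : NeZero (p ^ t) := ⟨pow_ne_zero _ hp.pos.ne'⟩
  haveI : Fact p.Prime := ⟨hp⟩
  have hdvd : p ∣ p ^ t := dvd_pow_self p (by omega)
  set φ := ZMod.castHom hdvd (ZMod p) with hφ
  have key : ∀ x : ZMod (p ^ t), φ x ≠ 0 → IsUnit x := by
    intro x hx
    rw [← ZMod.natCast_zmod_val x, ZMod.isUnit_iff_coprime,
      Nat.coprime_pow_right_iff (by omega), Nat.coprime_comm, hp.coprime_iff_not_dvd]
    intro hdx
    apply hx
    rw [hφ, ZMod.castHom_apply, ← ZMod.natCast_val]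
    exact (ZMod.natCast_eq_zero_iff _ _).mpr hdx
  have h2 : (2 : ZMod p) ≠ 0 := by
    have hnd : ¬ (p ∣ 2) := by
      intro h
      have := (Nat.prime_dvd_prime_iff_eq hp Nat.prime_two).mp h
      subst this
      simp [Nat.odd_iff] at hodd
    intro h
    apply hnd
    have : ((2 : ℕ) : ZMod p) = 0 := by push_cast; exact h
    exact (ZMod.natCast_eq_zero_iff _ _).mp this
  have hml : (l - 1) * (l + 1) = 0 := by linear_combination hl
  have hφml : φ (l - 1) * φ (l + 1) = 0 := by rw [← map_mul, hml, map_zero]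
  have hφ2 : φ 2 = 2 := map_ofNat φ 2
  rcases mul_eq_zero.mp hφml with h | h
  · left
    have hu : IsUnit (l + 1) := by
      apply key
      rw [show l + 1 = (l - 1) + 2 by ring, map_add, h, zero_add, hφ2]
      exact h2
    have h0 := (IsUnit.mul_left_eq_zero hu).mp hml
    exact sub_eq_zero.mp h0
  · right
    have hu : IsUnit (l - 1) := by
      apply key
      rw [show l - 1 = (l + 1) - 2 by ring, map_sub, h, zero_sub, hφ2]
      simpa using h2
    have h0 := (IsUnit.mul_right_eq_zero hu).mp hml
    exact eq_neg_of_add_eq_zero_left h0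

end DihedralAux

namespace DihedralAux

/-- Every order-2 automorphism of `D_{p^t}` is `Ψ_{k,-1}` for some `k`. -/
lemma psi_of_two {p t : ℕ} (hp : p.Prime) (hodd : Odd p) (ht : 1 ≤ t)
    (f : MulAut (DihedralGroup (p ^ t))) (hf : orderOf f = 2) :
    ∃ k, IsPsi (p ^ t) k (-1) f := by
  haveI : NeZero (p ^ t) := ⟨pow_ne_zero _ hp.pos.ne'⟩
  have hoddn : Odd (p ^ t) := hodd.pow
  obtain ⟨k, l, h1, h2⟩ := aut_form hoddn f
  have hsq : f * f = 1 := by rw [← sq, ← hf]; exact pow_orderOf_eq_one f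
  have hl2 : l * l = 1 := by
    have hx : (f * f) (r 1) = r 1 := by rw [hsq, MulAut.one_apply]
    rw [MulAut.mul_apply, h1, h1] at hx
    have := r.inj hx
    linear_combination this
  have hk2 : k + l * k = 0 := by
    have hx : (f * f) (sr 0) = sr 0 := by rw [hsq, MulAut.one_apply]
    rw [MulAut.mul_apply, h2, h2] at hx
    have := sr.inj hx
    linear_combination this
  rcases sq_root hp hodd ht hl2 with rfl | rfl
  · exfalso
    have hk0 : k = 0 := by
      apply (ZMod.add_self_eq_zero_iff_eq_zero hoddn).mp
      linear_combination hk2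
    have hf1 : f = 1 := by
      ext x
      rcases x with i | i
      · rw [h1, one_mul, MulAut.one_apply]
      · rw [h2, hk0, MulAut.one_apply, zero_add, one_mul]
    rw [hf1, orderOf_one] at hf
    omega
  · exact ⟨k, h1, h2⟩

/-- Any two `Ψ_{k,-1}` are conjugate (`n` odd). -/
lemma conj_psi {n : ℕ} [NeZero n] (hodd : Odd n) {f g : MulAut (DihedralGroup n)}
    {k k' : ZMod n} (hf : IsPsi n k (-1) f) (hg : IsPsi n k' (-1) g) : IsConj f g := by
  have h4 : IsUnit (4 : ZMod n) := by
    have h : IsUnit ((2 ^ 2 : ℕ) : ZMod n) := by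
      rw [ZMod.isUnit_iff_coprime]
      exact Nat.Coprime.pow_left _ hodd.coprime_two_left
    have e : ((2 ^ 2 : ℕ) : ZMod n) = 4 := by push_cast; norm_num
    rwa [e] at h
  obtain ⟨u, hu⟩ := h4
  set j : ZMod n := ↑u⁻¹ * (k - k') with hjdef
  have hj : 4 * j = k - k' := by
    rw [hjdef, ← mul_assoc, ← hu, u.mul_inv, one_mul]
  rw [isConj_iff]
  refine ⟨MulAut.conj (r j), ?_⟩
  ext x
  rcases x with i | i
  · rw [MulAut.mul_apply, MulAut.mul_apply, MulAut.conj_inv_apply, inv_r, r_mul_r, r_mul_r,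
      hf.1, MulAut.conj_apply, r_mul_r, inv_r, r_mul_r, hg.1]
    congr 1
    ring
  · rw [MulAut.mul_apply, MulAut.mul_apply, MulAut.conj_inv_apply, inv_r, r_mul_sr, sr_mul_r,
      hf.2, MulAut.conj_apply, r_mul_sr, inv_r, sr_mul_r, hg.2]
    congr 1
    linear_combination -hj

end DihedralAux

open DihedralAux in
/-- For `n = p^r` with `p` an odd prime and `r ≥ 1`, `Aut(D_n)` has exactly one
conjugacy class of elements of order `2`, represented by `Ψ_{0,-1}` (`r ↦ r⁻¹`,
`s ↦ s`). -/
theorem dihedral_primePow_aut_one_involution_class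
    (p r : ℕ) (hp : p.Prime) (hodd : Odd p) (hr : 1 ≤ r) :
    (∃ ψ : MulAut (DihedralGroup (p ^ r)), IsPsi (p ^ r) 0 (-1) ψ ∧ orderOf ψ = 2) ∧
    (∀ f g : MulAut (DihedralGroup (p ^ r)),
      orderOf f = 2 → orderOf g = 2 → IsConj f g) := by
  haveI : NeZero (p ^ r) := ⟨pow_ne_zero _ hp.pos.ne'⟩
  have hoddn : Odd (p ^ r) := hodd.pow
  have hp3 : 3 ≤ p := by
    have := hp.two_le
    rcases Nat.lt_or_ge p 3 with h | h
    · interval_cases p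
      · simp [Nat.odd_iff] at hodd
    · exact h
  have hn3 : 3 ≤ p ^ r := le_trans hp3 (Nat.le_self_pow (by omega) p)
  constructor
  · refine ⟨psiNeg (p ^ r), psiNeg_isPsi _, ?_⟩
    apply orderOf_eq_prime
    · ext x
      rcases x with i | i
      · show DihedralGroup.r (- -i) = DihedralGroup.r i
        rw [neg_neg]
      · show DihedralGroup.sr (- -i) = DihedralGroup.sr i
        rw [neg_neg]
    · intro h
      have hx : psiNeg (p ^ r) (DihedralGroup.r 1) = DihedralGroup.r 1 := by rw [h, MulAut.one_apply]
      have hx2 : (DihedralGroup.r (-1) : DihedralGroup (p ^ r)) = DihedralGroup.r 1 := hx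
      have h1 : (-1 : ZMod (p ^ r)) = 1 := DihedralGroup.r.inj hx2
      have h20 : ((2 : ℕ) : ZMod (p ^ r)) = 0 := by push_cast; linear_combination -h1
      rw [ZMod.natCast_eq_zero_iff] at h20
      have := Nat.le_of_dvd (by norm_num) h20
      omega
  · intro f g hf hg
    obtain ⟨kf, hfp⟩ := psi_of_two hp hodd hr f hf
    obtain ⟨kg, hgp⟩ := psi_of_two hp hodd hr g hg
    exact conj_psi hoddn hfp hgp
end

section
/- Let n = p^r q^s with p, q distinct odd primes and r, s ≥ 1. Then the automorphism group Aut(D_n) of the dihedral group of order 2n has exactly 3 conjugacy classes of elements of order 2. -/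
/-!
Every automorphism of `D_n`, `n` odd, is some `Ψ_{k,l}`, and these compose like the affine maps
`i ↦ k + l i` of `ZMod n`. Conjugation does not change the linear part `l`, and an involution
`Ψ_{k,l}` has `(1 + l) k = 0`, so conjugating it by `Ψ_{-k/2,1}` gives `Ψ_{0,l}`, whose order
is that of `l`. Hence the classes of involutions correspond to the elements of order `2` of
`(ZMod n)ˣ`. Each `(ZMod (p^r))ˣ` is cyclic, so has two square roots of unity, and by the
Chinese remainder theorem `(ZMod n)ˣ` has `2 · 2 - 1 = 3` elements of order `2`.
-/

open DihedralGroup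

namespace DihedralGroup

variable {n : ℕ}

/-- The paper's `Ψ_{k,l}`, with `s = sr 0` and hence `s r^k = sr k`. -/
def affineAut (k : ZMod n) (l : (ZMod n)ˣ) : MulAut (DihedralGroup n) where
  toFun
    | r i => r (l * i)
    | sr i => sr (k + l * i)
  invFun
    | r i => r (↑l⁻¹ * i)
    | sr i => sr (↑l⁻¹ * (i - k))
  left_inv := by rintro (i | i) <;> simp [← mul_assoc]
  right_inv := by rintro (i | i) <;> simp [mul_sub, ← mul_assoc]
  map_mul' := by
    rintro (i | i) (j | j) <;> simp [r_mul_r, r_mul_sr, sr_mul_r, sr_mul_sr] <;> ring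

@[simp] lemma affineAut_r (k : ZMod n) (l : (ZMod n)ˣ) (i : ZMod n) :
    affineAut k l (r i) = r ((l : ZMod n) * i) := rfl

@[simp] lemma affineAut_sr (k : ZMod n) (l : (ZMod n)ˣ) (i : ZMod n) :
    affineAut k l (sr i) = sr (k + (l : ZMod n) * i) := rfl

lemma affineAut_mul (k k' : ZMod n) (l l' : (ZMod n)ˣ) :
    affineAut k l * affineAut k' l' = affineAut (k + (l : ZMod n) * k') (l * l') := by
  ext (i | i) <;> simp [mul_add, mul_assoc, add_assoc]

lemma affineAut_zero_one : affineAut (0 : ZMod n) 1 = 1 := by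
  ext (i | i) <;> simp

lemma affineAut_inj {k k' : ZMod n} {l l' : (ZMod n)ˣ} :
    affineAut k l = affineAut k' l' ↔ k = k' ∧ l = l' := by
  refine ⟨fun h => ⟨?_, Units.ext ?_⟩, fun ⟨hk, hl⟩ => hk ▸ hl ▸ rfl⟩
  · simpa using DFunLike.congr_fun h (sr 0)
  · simpa using DFunLike.congr_fun h (r 1)

lemma orderOf_affineAut_zero (l : (ZMod n)ˣ) : orderOf (affineAut 0 l) = orderOf l :=
  orderOf_injective (MonoidHom.mk' (affineAut 0) fun l l' => by simp [affineAut_mul])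
    (fun _ _ h => (affineAut_inj.mp h).2) l

lemma exists_eq_r_of_orderOf_ne_two {x : DihedralGroup n} (hx : orderOf x ≠ 2) :
    ∃ i, x = r i := by
  rcases x with i | i
  · exact ⟨i, rfl⟩
  · exact absurd (orderOf_sr i) hx

lemma exists_eq_sr_of_orderOf_eq_two (hn : Odd n) {x : DihedralGroup n} (hx : orderOf x = 2) :
    ∃ i, x = sr i := by
  rcases x with i | i
  · have : orderOf (r i) ∣ n :=
      orderOf_dvd_of_pow_eq_one (by rw [r_pow, ZMod.natCast_self, mul_zero, r_zero])
    exact absurd (hx ▸ this) hn.not_two_dvd_nat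
  · exact ⟨i, rfl⟩

lemma exists_eq_affineAut (hn : Odd n) (f : MulAut (DihedralGroup n)) :
    ∃ k l, f = affineAut k l := by
  have : NeZero n := ⟨hn.pos.ne'⟩
  have hrot (g : MulAut (DihedralGroup n)) : ∃ l, ∀ i, g (r i) = r (l * i) := by
    obtain ⟨l, hl⟩ := exists_eq_r_of_orderOf_ne_two (x := g (r 1)) <| by
      rw [MulEquiv.orderOf_eq, orderOf_r_one]
      rintro rfl
      exact hn.not_two_dvd_nat dvd_rfl
    refine ⟨l, fun i => ?_⟩
    rw [← ZMod.natCast_zmod_val i, ← r_one_pow, map_pow, hl, r_pow]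
  obtain ⟨l, hl⟩ := hrot f
  obtain ⟨m, hm⟩ := hrot f⁻¹
  obtain ⟨k, hk⟩ := exists_eq_sr_of_orderOf_eq_two hn (x := f (sr 0)) <| by
    rw [MulEquiv.orderOf_eq, orderOf_sr]
  have hlm : l * m = 1 := by
    have h : f (f⁻¹ (r 1)) = r 1 := by
      rw [← MulAut.mul_apply, mul_inv_cancel, MulAut.one_apply]
    rw [hm, hl, mul_one] at h
    exact r.inj h
  refine ⟨k, ⟨l, m, hlm, mul_comm m l ▸ hlm⟩, ?_⟩
  ext (i | i)
  · exact hl i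
  · rw [← zero_add i, ← sr_mul_r, map_mul, hk, hl, sr_mul_r]
    simp

lemma units_eq_of_isConj_affineAut (hn : Odd n) {k k' : ZMod n} {l l' : (ZMod n)ˣ}
    (h : IsConj (affineAut k l) (affineAut k' l')) : l = l' := by
  obtain ⟨c, hc⟩ := h
  obtain ⟨m, t, hct⟩ := exists_eq_affineAut hn c
  rw [SemiconjBy, hct, affineAut_mul, affineAut_mul, affineAut_inj] at hc
  exact mul_left_cancel (hc.2.trans (mul_comm l' t))

lemma isConj_affineAut_zero (hn : Odd n) {k : ZMod n} {l : (ZMod n)ˣ}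
    (hk : k + (l : ZMod n) * k = 0) : IsConj (affineAut k l) (affineAut 0 l) := by
  obtain ⟨w, hw⟩ : IsUnit (2 : ZMod n) := by
    simpa using (ZMod.isUnit_iff_coprime 2 n).mpr (Nat.coprime_two_left.mpr hn)
  have hw' : (2 : ZMod n) * ↑w⁻¹ = 1 := by rw [← hw, Units.mul_inv]
  refine isConj_iff.mpr ⟨affineAut (-(↑w⁻¹ * k)) 1, ?_⟩
  rw [mul_inv_eq_iff_eq_mul, affineAut_mul, affineAut_mul, affineAut_inj]
  refine ⟨?_, mul_comm _ _⟩
  rw [Units.val_one, one_mul]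
  linear_combination ↑w⁻¹ * hk - k * hw'

lemma exists_isConj_affineAut_zero (hn : Odd n) {g : MulAut (DihedralGroup n)} (hg : g ^ 2 = 1) :
    ∃ l, IsConj g (affineAut 0 l) := by
  obtain ⟨k, l, rfl⟩ := exists_eq_affineAut hn g
  rw [sq, affineAut_mul, ← affineAut_zero_one, affineAut_inj] at hg
  exact ⟨l, isConj_affineAut_zero hn hg.1⟩

end DihedralGroup

namespace ZMod

theorem ncard_units_sq_eq_one_of_primePow {p k : ℕ} (hp : p.Prime) (hp2 : p ≠ 2)
    (hk : k ≠ 0) :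
    {x : (ZMod (p ^ k))ˣ | x ^ 2 = 1}.ncard = 2 := by
  classical
  have : NeZero (p ^ k) := ⟨pow_ne_zero k hp.ne_zero⟩
  have : IsCyclic (ZMod (p ^ k))ˣ := isCyclic_units_of_prime_pow p hp hp2 k
  have : Fact (2 < p ^ k) := ⟨(hp.two_le.lt_of_ne' hp2).trans_le (Nat.le_self_pow hk p)⟩
  have hne : (1 : (ZMod (p ^ k))ˣ) ≠ -1 := fun h => neg_one_ne_one (congrArg Units.val h).symm
  refine le_antisymm ?_ ?_
  · rw [← Finset.coe_filter_univ, Set.ncard_coe_finset]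
    exact IsCyclic.card_pow_eq_one_le two_pos
  · calc 2 = ({1, -1} : Set (ZMod (p ^ k))ˣ).ncard := (Set.ncard_pair hne).symm
      _ ≤ _ := Set.ncard_le_ncard (by simp [Set.insert_subset_iff])

theorem ncard_units_sq_eq_one_mul {a b : ℕ} (h : a.Coprime b) :
    {x : (ZMod (a * b))ˣ | x ^ 2 = 1}.ncard =
      {x : (ZMod a)ˣ | x ^ 2 = 1}.ncard * {x : (ZMod b)ˣ | x ^ 2 = 1}.ncard := by
  let e : (ZMod (a * b))ˣ ≃* (ZMod a)ˣ × (ZMod b)ˣ :=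
    (Units.mapEquiv (chineseRemainder h).toMulEquiv).trans MulEquiv.prodUnits
  rw [← Set.ncard_prod, ← Set.ncard_preimage_of_injective_subset_range e.injective
    (by simp [e.surjective.range_eq])]
  congr 1
  ext x
  rw [Set.mem_ofPred_eq, ← e.map_eq_one_iff, map_pow, Prod.ext_iff]
  rfl

theorem ncard_units_orderOf_eq_two_primePow_mul {p q r s : ℕ} (hp : p.Prime) (hq : q.Prime)
    (hpq : p ≠ q) (hp2 : p ≠ 2) (hq2 : q ≠ 2) (hr : r ≠ 0) (hs : s ≠ 0) :
    {x : (ZMod (p ^ r * q ^ s))ˣ | orderOf x = 2}.ncard = 3 := by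
  have hcop : (p ^ r).Coprime (q ^ s) := Nat.Coprime.pow _ _ ((Nat.coprime_primes hp hq).mpr hpq)
  have : {x : (ZMod (p ^ r * q ^ s))ˣ | orderOf x = 2} = {x | x ^ 2 = 1} \ {1} := by
    ext x
    simp [orderOf_eq_prime_iff]
  rw [this, Set.ncard_sdiff_singleton_of_mem (by simp), ncard_units_sq_eq_one_mul hcop,
    ncard_units_sq_eq_one_of_primePow hp hp2 hr, ncard_units_sq_eq_one_of_primePow hq hq2 hs]

end ZMod

/-- For `n = p^r q^s` with `p, q` distinct odd primes and `r, s ≥ 1`, the automorphism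
group of the dihedral group `D_n` of order `2n` has exactly `3` conjugacy classes of
elements of order `2`. -/
theorem dihedral_two_primePow_aut_three_involution_classes
    (p q r s : ℕ) (hp : p.Prime) (hq : q.Prime) (hpq : p ≠ q)
    (hpodd : Odd p) (hqodd : Odd q) (hr : 1 ≤ r) (hs : 1 ≤ s) :
    ∃ f₁ f₂ f₃ : MulAut (DihedralGroup (p ^ r * q ^ s)),
      orderOf f₁ = 2 ∧ orderOf f₂ = 2 ∧ orderOf f₃ = 2 ∧
      List.Pairwise (fun a b => ¬ IsConj a b) [f₁, f₂, f₃] ∧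
      ∀ g : MulAut (DihedralGroup (p ^ r * q ^ s)),
        orderOf g = 2 → IsConj g f₁ ∨ IsConj g f₂ ∨ IsConj g f₃ := by
  have hn : Odd (p ^ r * q ^ s) := hpodd.pow.mul hqodd.pow
  obtain ⟨l₁, l₂, l₃, h₁₂, h₁₃, h₂₃, hinv⟩ := Set.ncard_eq_three.mp <|
    ZMod.ncard_units_orderOf_eq_two_primePow_mul hp hq hpq (hpodd.ne_two_of_dvd_nat dvd_rfl)
      (hqodd.ne_two_of_dvd_nat dvd_rfl) (Nat.one_le_iff_ne_zero.mp hr)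
      (Nat.one_le_iff_ne_zero.mp hs)
  have horder (l) : orderOf l = 2 ↔ l = l₁ ∨ l = l₂ ∨ l = l₃ := by
    simpa using Set.ext_iff.mp hinv l
  have hconj (l l') (hne : l ≠ l') : ¬ IsConj (affineAut 0 l) (affineAut 0 l') :=
    fun h => hne (units_eq_of_isConj_affineAut hn h)
  refine ⟨affineAut 0 l₁, affineAut 0 l₂, affineAut 0 l₃, ?_, ?_, ?_, ?_, ?_⟩
  iterate 3 simp [orderOf_affineAut_zero, horder]
  · have : [l₁, l₂, l₃].Pairwise (· ≠ ·) := by simp [h₁₂, h₁₃, h₂₃]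
    exact (List.pairwise_map (R := fun a b => ¬ IsConj a b) (f := affineAut 0)).mpr
      (this.imp (hconj _ _))
  · intro g hg
    obtain ⟨l, hgl⟩ := exists_isConj_affineAut_zero hn (hg ▸ pow_orderOf_eq_one g)
    have hl : orderOf l = 2 := by
      obtain ⟨c, hc⟩ := hgl
      rw [← orderOf_affineAut_zero, ← hc.orderOf_eq, hg]
    rcases (horder l).mp hl with rfl | rfl | rfl
    exacts [.inl hgl, .inr (.inl hgl), .inr (.inr hgl)]
end

section
/- Let n = 2^r with r ≥ 3 and let D_n be the dihedral group of order 2n. Then Aut(D_n) has exactly 5 conjugacy classes of elements of order 2, represented by Ψ_{2^{r−1},1}, Ψ_{0,2^{r−1}−1}, Ψ_{0,2^{r−1}+1}, Ψ_{0,−1}, and Ψ_{1,−1}. -/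
/-!
An automorphism of `D_n`, `n > 2`, must send the element `r 1` of order `n` to a rotation `r l`
and the reflection `sr 0` to a reflection `sr k`, so it is `Ψ_{k,l}`, and these compose by the
affine law `Ψ_{a,b} Ψ_{k,l} = Ψ_{a + b k, b l}`. Hence `Ψ_{a,b}` conjugates `Ψ_{k,l}` to
`Ψ_{a + b k - l a, l}`: the class of `Ψ_{k,l}` keeps `l`, and `k` may be replaced by
`b k + (1 - l) a` for any `a` and any unit `b`.

For `n = 2^r`, `r ≥ 3`, the square roots of `1` are `1`, `2^{r-1} ± 1` and `-1`. For each of them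
the involution condition `k (l + 1) = 0` forces `1 - l ∣ k`, or `1 - l ∣ k - 1` when `l = -1`,
except that for `l = 1` it leaves the single value `k = 2^{r-1}`. The five resulting classes are
told apart by `l` and, for `l = -1`, by the parity of `k`, which `k ↦ b k + 2 a` preserves.
-/

open DihedralGroup

namespace ZMod

lemma exists_eq_mul_of_mul_eq_zero {n a b : ℕ} (hn : n = a * b) (hb : b ≠ 0) {k : ZMod n}
    (h : (b : ZMod n) * k = 0) : ∃ t, k = a * t := by
  obtain ⟨z, rfl⟩ := intCast_surjective k
  have hdvd : (a : ℤ) * b ∣ z * b := by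
    rw [mul_comm z, ← Int.natCast_mul, ← hn, ← intCast_zmod_eq_zero_iff_dvd]
    push_cast
    exact h
  obtain ⟨t, rfl⟩ := Int.dvd_of_mul_dvd_mul_right (by exact_mod_cast hb) hdvd
  exact ⟨t, by push_cast; rfl⟩

lemma exists_eq_two_mul_or_two_mul_add_one {n : ℕ} (k : ZMod n) :
    ∃ t, k = 2 * t ∨ k = 2 * t + 1 := by
  obtain ⟨z, rfl⟩ := intCast_surjective k
  obtain ⟨t, rfl | rfl⟩ := Int.even_or_odd' z <;> exact ⟨t, by push_cast; simp⟩

lemma natCast_ne_natCast_of_lt {n a b : ℕ} (ha : a < n) (hb : b < n) (hab : a ≠ b) :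
    (a : ZMod n) ≠ b := by
  rwa [Ne, natCast_eq_natCast_iff', Nat.mod_eq_of_lt ha, Nat.mod_eq_of_lt hb]

variable {r : ℕ}

lemma isNilpotent_two_mul (t : ZMod (2 ^ r)) : IsNilpotent (2 * t) :=
  (Commute.all _ _).isNilpotent_mul_right ⟨r, by exact_mod_cast natCast_self (2 ^ r)⟩

lemma isUnit_two_mul_add_one (t : ZMod (2 ^ r)) : IsUnit (2 * t + 1) :=
  (isNilpotent_two_mul t).isUnit_add_one

lemma two_mul_two_pow_pred (hr : r ≠ 0) : 2 * ((2 ^ (r - 1) : ℕ) : ZMod (2 ^ r)) = 0 := by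
  have h : 2 * 2 ^ (r - 1) = 2 ^ r := by rw [← pow_succ', Nat.sub_add_cancel (by omega)]
  exact_mod_cast (congrArg (Nat.cast : ℕ → ZMod (2 ^ r)) h).trans (natCast_self _)

lemma two_pow_pred_eq_two_mul (hr : 2 ≤ r) :
    ((2 ^ (r - 1) : ℕ) : ZMod (2 ^ r)) = 2 * ((2 ^ (r - 2) : ℕ) : ZMod (2 ^ r)) := by
  push_cast
  rw [← pow_succ', show r - 2 + 1 = r - 1 by omega]

lemma two_pow_pred_mul_two_pow_sub_two (hr : 3 ≤ r) :
    ((2 ^ (r - 1) : ℕ) : ZMod (2 ^ r)) * ((2 ^ (r - 2) : ℕ) : ZMod (2 ^ r)) = 0 := by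
  rw [← Nat.cast_mul, ← pow_add, show r - 1 + (r - 2) = r + (r - 3) by omega, pow_add,
    Nat.cast_mul, natCast_self, zero_mul]

lemma two_pow_pred_mul_eq_zero_or_eq (hr : r ≠ 0) (t : ZMod (2 ^ r)) :
    ((2 ^ (r - 1) : ℕ) : ZMod (2 ^ r)) * t = 0 ∨
      ((2 ^ (r - 1) : ℕ) : ZMod (2 ^ r)) * t = ((2 ^ (r - 1) : ℕ) : ZMod (2 ^ r)) := by
  have h := two_mul_two_pow_pred hr
  obtain ⟨s, rfl | rfl⟩ := exists_eq_two_mul_or_two_mul_add_one t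
  · left; linear_combination s * h
  · right; linear_combination s * h

lemma eq_zero_or_eq_two_pow_pred_of_two_mul_eq_zero (hr : r ≠ 0) {k : ZMod (2 ^ r)}
    (h : 2 * k = 0) : k = 0 ∨ k = ((2 ^ (r - 1) : ℕ) : ZMod (2 ^ r)) := by
  obtain ⟨t, rfl⟩ := exists_eq_mul_of_mul_eq_zero (a := 2 ^ (r - 1)) (b := 2)
    (by rw [← pow_succ, Nat.sub_add_cancel (by omega)]) two_ne_zero (by exact_mod_cast h)
  exact two_pow_pred_mul_eq_zero_or_eq hr t

lemma exists_eq_two_mul_of_mul_two_pow_pred_eq_zero (hr : r ≠ 0) {k : ZMod (2 ^ r)}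
    (h : k * ((2 ^ (r - 1) : ℕ) : ZMod (2 ^ r)) = 0) : ∃ t, k = 2 * t := by
  obtain ⟨t, rfl⟩ := exists_eq_mul_of_mul_eq_zero (a := 2) (b := 2 ^ (r - 1))
    (by rw [← pow_succ', Nat.sub_add_cancel (by omega)]) (by positivity) (by rwa [mul_comm] at h)
  exact ⟨t, by push_cast; rfl⟩

lemma exists_two_mul_eq_two_pow_pred_mul (hr : 2 ≤ r) {a b j : ZMod (2 ^ r)} (hb : IsUnit b)
    (h : a * b = ((2 ^ (r - 2) : ℕ) : ZMod (2 ^ r)) * j) :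
    ∃ m, 2 * a = ((2 ^ (r - 1) : ℕ) : ZMod (2 ^ r)) * m := by
  obtain ⟨v, rfl⟩ := hb
  refine ⟨j * ↑v⁻¹, ?_⟩
  rw [two_pow_pred_eq_two_mul hr]
  linear_combination 2 * ↑v⁻¹ * h - 2 * a * v.mul_inv

lemma exists_eq_two_pow_pred_mul_add_one_or_sub_one (hr : 2 ≤ r) {x : ZMod (2 ^ r)}
    (hx : x ^ 2 = 1) :
    ∃ m, x = ((2 ^ (r - 1) : ℕ) : ZMod (2 ^ r)) * m + 1 ∨
      x = ((2 ^ (r - 1) : ℕ) : ZMod (2 ^ r)) * m - 1 := by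
  have : Fact (1 < 2 ^ r) := ⟨Nat.one_lt_two_pow (by omega)⟩
  obtain ⟨t, rfl | rfl⟩ := exists_eq_two_mul_or_two_mul_add_one x
  · have := (isNilpotent_two_mul t).pow_succ 1
    rw [hx] at this
    exact absurd this not_isNilpotent_one
  -- `x ^ 2 = 1` says `4 t (t + 1) = 0`, and one of `t`, `t + 1` is a unit
  obtain ⟨j, hj⟩ := exists_eq_mul_of_mul_eq_zero (a := 2 ^ (r - 2)) (b := 4) (k := t * (t + 1))
    (by rw [show 4 = 2 ^ 2 by rfl, ← pow_add, Nat.sub_add_cancel hr]) four_ne_zero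
    (by push_cast; linear_combination hx)
  obtain ⟨s, rfl | rfl⟩ := exists_eq_two_mul_or_two_mul_add_one t
  · obtain ⟨m, hm⟩ := exists_two_mul_eq_two_pow_pred_mul hr (isUnit_two_mul_add_one s) hj
    exact ⟨m, .inl (by rw [← hm])⟩
  · obtain ⟨m, hm⟩ := exists_two_mul_eq_two_pow_pred_mul hr (isUnit_two_mul_add_one s)
      (by rw [← hj, mul_comm])
    exact ⟨m, .inr (by linear_combination hm)⟩

lemma sq_eq_one_iff_of_two_le (hr : 2 ≤ r) {x : ZMod (2 ^ r)} :
    x ^ 2 = 1 ↔ x = 1 ∨ x = ((2 ^ (r - 1) : ℕ) : ZMod (2 ^ r)) - 1 ∨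
      x = ((2 ^ (r - 1) : ℕ) : ZMod (2 ^ r)) + 1 ∨ x = -1 := by
  have hH := two_pow_pred_eq_two_mul hr
  have hH2 := two_mul_two_pow_pred (r := r) (by omega)
  constructor
  · intro hx
    obtain ⟨m, rfl | rfl⟩ := exists_eq_two_pow_pred_mul_add_one_or_sub_one hr hx <;>
      rcases two_pow_pred_mul_eq_zero_or_eq (r := r) (by omega) m with h | h <;> rw [h] <;> simp
  · set H : ZMod (2 ^ r) := ((2 ^ (r - 1) : ℕ) : ZMod (2 ^ r))
    rintro (rfl | rfl | rfl | rfl)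
    · ring
    · linear_combination H * hH + ((2 ^ (r - 2) : ℕ) - 1 : ZMod (2 ^ r)) * hH2
    · linear_combination H * hH + ((2 ^ (r - 2) : ℕ) + 1 : ZMod (2 ^ r)) * hH2
    · ring

lemma two_pow_pred_ne_zero (hr : r ≠ 0) : ((2 ^ (r - 1) : ℕ) : ZMod (2 ^ r)) ≠ 0 := by
  exact_mod_cast natCast_ne_natCast_of_lt (b := 0)
    (Nat.pow_lt_pow_right one_lt_two (show r - 1 < r by omega))
    (by positivity) (by positivity)

lemma nodup_sq_eq_one_solutions (hr : 3 ≤ r) :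
    [1, ((2 ^ (r - 1) : ℕ) : ZMod (2 ^ r)) - 1, ((2 ^ (r - 1) : ℕ) : ZMod (2 ^ r)) + 1,
      -1].Nodup := by
  have hpow : 2 ^ (r - 1) * 2 = 2 ^ r := by rw [← pow_succ, Nat.sub_add_cancel (by omega)]
  have h4 : 2 ^ 2 ≤ 2 ^ (r - 1) := Nat.pow_le_pow_right two_pos (by omega)
  have hne {a b : ℕ} (ha : a ≤ 2 ^ (r - 1) + 2) (hb : b ≤ 2 ^ (r - 1) + 2) (hab : a ≠ b) :
      (a : ZMod (2 ^ r)) ≠ b :=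
    natCast_ne_natCast_of_lt (by omega) (by omega) hab
  have h2 : (2 : ZMod (2 ^ r)) ≠ 0 := by
    exact_mod_cast hne (a := 2) (b := 0) (by omega) (by omega) (by omega)
  have hH := two_pow_pred_ne_zero (r := r) (by omega)
  have hH2 : ((2 ^ (r - 1) : ℕ) : ZMod (2 ^ r)) ≠ 2 := by
    exact_mod_cast hne (b := 2) (by omega) (by omega) (by omega)
  have hH2' : ((2 ^ (r - 1) : ℕ) : ZMod (2 ^ r)) + 2 ≠ 0 := by
    exact_mod_cast hne (a := 2 ^ (r - 1) + 2) (b := 0) le_rfl (by omega) (by omega)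
  simp only [List.nodup_cons, List.mem_cons, List.not_mem_nil, or_false, not_or, List.nodup_nil,
    not_false_eq_true, and_true]
  refine ⟨⟨?_, ?_, ?_⟩, ⟨?_, ?_⟩, ?_⟩ <;> intro h
  exacts [hH2 (by linear_combination -h), hH (by linear_combination -h),
    h2 (by linear_combination h), h2 (by linear_combination -h), hH (by linear_combination h),
    hH2' (by linear_combination h)]

end ZMod

namespace DihedralGroup

variable {n : ℕ}

def psiFun (k l : ZMod n) : DihedralGroup n → DihedralGroup n
  | r i => r (l * i)
  | sr i => sr (k + l * i)

def psi (k : ZMod n) (l : (ZMod n)ˣ) : MulAut (DihedralGroup n) where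
  toFun := psiFun k l
  invFun := psiFun (-((↑l⁻¹ : ZMod n) * k)) (↑l⁻¹ : ZMod n)
  left_inv := by rintro (i | i) <;> simp [psiFun, mul_add]
  right_inv := by rintro (i | i) <;> simp [psiFun, mul_add]
  map_mul' := by
    rintro (i | i) (j | j) <;> simp only [psiFun, r_mul_r, r_mul_sr, sr_mul_r, sr_mul_sr] <;>
      congr 1 <;> ring

section Psi

variable (k : ZMod n) (l : (ZMod n)ˣ)

@[simp] lemma psi_r (i : ZMod n) : psi k l (r i) = r ((l : ZMod n) * i) := rfl

@[simp] lemma psi_sr (i : ZMod n) : psi k l (sr i) = sr (k + (l : ZMod n) * i) := rfl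

lemma isPsi_psi : IsPsi n k l (psi k l) := ⟨psi_r k l, psi_sr k l⟩

lemma psi_mul (k' : ZMod n) (l' : (ZMod n)ˣ) :
    psi k l * psi k' l' = psi (k + (l : ZMod n) * k') (l * l') := by
  ext (i | i) <;> simp only [MulAut.mul_apply, psi_r, psi_sr, Units.val_mul] <;> congr 1 <;> ring

variable {k l} in
lemma psi_inj {k' : ZMod n} {l' : (ZMod n)ˣ} : psi k l = psi k' l' ↔ k = k' ∧ l = l' := by
  refine ⟨fun h => ?_, fun ⟨hk, hl⟩ => hk ▸ hl ▸ rfl⟩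
  have h₁ := DFunLike.congr_fun h (r 1)
  have h₂ := DFunLike.congr_fun h (sr 0)
  simp only [psi_r, psi_sr, mul_one, mul_zero, add_zero, r.injEq, sr.injEq] at h₁ h₂
  exact ⟨h₂, Units.ext h₁⟩

lemma psi_zero_one : psi (0 : ZMod n) 1 = 1 := by
  ext (i | i) <;> simp

lemma psi_eq_one_iff : psi k l = 1 ↔ k = 0 ∧ l = 1 := by
  rw [← psi_zero_one, psi_inj]

lemma psi_inv : (psi k l)⁻¹ = psi (-((↑l⁻¹ : ZMod n) * k)) l⁻¹ :=
  inv_eq_of_mul_eq_one_right <| by simp [psi_mul, ← psi_zero_one]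

lemma psi_conj (a : ZMod n) (b : (ZMod n)ˣ) :
    psi a b * psi k l * (psi a b)⁻¹ = psi (a + (b : ZMod n) * k - (l : ZMod n) * a) l := by
  rw [psi_inv, psi_mul, psi_mul, psi_inj]
  constructor
  · simp only [Units.val_mul]
    linear_combination (-(l * a : ZMod n)) * b.mul_inv
  · rw [mul_comm b l, mul_inv_cancel_right]

lemma psi_sq : psi k l ^ 2 = psi (k * ((l : ZMod n) + 1)) (l ^ 2) := by
  rw [sq, psi_mul, sq, psi_inj]
  exact ⟨by ring, rfl⟩

lemma orderOf_psi_eq_two_iff :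
    orderOf (psi k l) = 2 ↔
      (k, (l : ZMod n)) ≠ (0, 1) ∧ (l : ZMod n) ^ 2 = 1 ∧ k * (l + 1) = 0 := by
  rw [orderOf_eq_prime_iff, psi_sq, psi_eq_one_iff, Ne, psi_eq_one_iff, Ne, Prod.mk.injEq,
    ← Units.val_pow_eq_pow_val, Units.val_eq_one, Units.val_eq_one]
  tauto

end Psi

lemma orderOf_psi_one_eq_two {k : ZMod n} (hk : 2 * k = 0) (hk₀ : k ≠ 0) :
    orderOf (psi k 1) = 2 :=
  (orderOf_psi_eq_two_iff k 1).2
    ⟨by simpa using hk₀, by simp, by rwa [Units.val_one, one_add_one_eq_two, mul_comm]⟩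

lemma orderOf_psi_zero_eq_two {l : (ZMod n)ˣ} (hl : (l : ZMod n) ^ 2 = 1)
    (hl₁ : (l : ZMod n) ≠ 1) : orderOf (psi 0 l) = 2 :=
  (orderOf_psi_eq_two_iff 0 l).2 ⟨by simpa using hl₁, hl, zero_mul _⟩

lemma orderOf_psi_eq_two_of_val_eq_neg_one {k : ZMod n} {l : (ZMod n)ˣ}
    (hl : (l : ZMod n) = -1) (h : (-1 : ZMod n) ≠ 1) : orderOf (psi k l) = 2 :=
  (orderOf_psi_eq_two_iff k l).2 ⟨by simp [hl, h], by simp [hl], by simp [hl]⟩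

lemma exists_forall_map_r_eq_r (hn : 2 < n) (f : MulAut (DihedralGroup n)) :
    ∃ l : ZMod n, ∀ i, f (r i) = r (l * i) := by
  obtain ⟨l, hl⟩ : ∃ l, f (r 1) = r l := by
    rcases h : f (r 1) with l | l
    · exact ⟨l, rfl⟩
    · have := f.orderOf_eq (r 1)
      rw [h, orderOf_sr, orderOf_r_one] at this
      omega
  have : NeZero n := ⟨by omega⟩
  refine ⟨l, fun i => ?_⟩
  rw [← ZMod.natCast_zmod_val i, ← r_one_pow, map_pow, hl, r_pow, mul_comm]

lemma exists_eq_psi (hn : 2 < n) (f : MulAut (DihedralGroup n)) :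
    ∃ (k : ZMod n) (l : (ZMod n)ˣ), f = psi k l := by
  obtain ⟨l, hl⟩ := exists_forall_map_r_eq_r hn f
  obtain ⟨l', hl'⟩ := exists_forall_map_r_eq_r hn f⁻¹
  have hll' : l * l' = 1 := by
    have := f.apply_symm_apply (r 1)
    rwa [← MulAut.inv_def, hl', hl, mul_one, r.injEq] at this
  obtain ⟨k, hk⟩ : ∃ k, f (sr 0) = sr k := by
    rcases h : f (sr 0) with j | j
    · have := f.symm_apply_apply (sr 0)
      rw [h, ← MulAut.inv_def, hl'] at this
      cases this
    · exact ⟨j, rfl⟩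
  refine ⟨k, Units.mkOfMulEqOne l l' hll', MulEquiv.ext fun x => ?_⟩
  rcases x with i | i
  · exact hl i
  · calc f (sr i) = f (sr 0 * r i) := by rw [sr_mul_r, zero_add]
      _ = sr (k + l * i) := by rw [map_mul, hk, hl, sr_mul_r]

lemma isConj_psi_iff (hn : 2 < n) {k k' : ZMod n} {l l' : (ZMod n)ˣ} :
    IsConj (psi k l) (psi k' l') ↔
      l = l' ∧ ∃ (a : ZMod n) (b : (ZMod n)ˣ), a + b * k - l * a = k' := by
  simp only [isConj_iff]
  constructor
  · rintro ⟨c, hc⟩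
    obtain ⟨a, b, rfl⟩ := exists_eq_psi hn c
    rw [psi_conj, psi_inj] at hc
    exact ⟨hc.2, a, b, hc.1⟩
  · rintro ⟨rfl, a, b, hk⟩
    exact ⟨psi a b, by rw [psi_conj, hk]⟩

lemma isConj_psi_of_dvd {k k' : ZMod n} {l l' : (ZMod n)ˣ} (hl : (l : ZMod n) = l')
    (h : 1 - (l : ZMod n) ∣ k - k') : IsConj (psi k l) (psi k' l') := by
  obtain ⟨c, hc⟩ := h
  obtain rfl := Units.ext hl
  refine isConj_iff.2 ⟨psi (-c) 1, ?_⟩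
  rw [psi_conj, psi_inj]
  exact ⟨by push_cast; linear_combination hc, rfl⟩

lemma isConj_psi_zero_or_psi_one_of_val_eq_neg_one {k : ZMod n} {l l' : (ZMod n)ˣ}
    (hl : (l : ZMod n) = -1) (hl' : (l' : ZMod n) = l) :
    IsConj (psi k l) (psi 0 l') ∨ IsConj (psi k l) (psi 1 l') := by
  obtain ⟨t, rfl | rfl⟩ := ZMod.exists_eq_two_mul_or_two_mul_add_one k
  · exact .inl <| isConj_psi_of_dvd hl'.symm ⟨t, by rw [hl]; ring⟩
  · exact .inr <| isConj_psi_of_dvd hl'.symm ⟨t, by rw [hl]; ring⟩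

lemma castHom_eq_of_isConj_psi (hn : 2 < n) (h2 : 2 ∣ n) {k k' : ZMod n} {l l' : (ZMod n)ˣ}
    (h : IsConj (psi k l) (psi k' l')) :
    ZMod.castHom h2 (ZMod 2) k = ZMod.castHom h2 (ZMod 2) k' := by
  obtain ⟨-, a, b, rfl⟩ := (isConj_psi_iff hn).1 h
  have hunit (u : (ZMod n)ˣ) : ZMod.castHom h2 (ZMod 2) u = 1 :=
    congrArg Units.val (Subsingleton.elim (Units.map (ZMod.castHom h2 (ZMod 2)).toMonoidHom u) 1)
  rw [map_sub, map_add, map_mul, map_mul, hunit, hunit]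
  ring

lemma pairwise_not_isConj_psi (hn : 2 < n) (h2 : 2 ∣ n) (L : List (ZMod n × (ZMod n)ˣ))
    (hL : (L.map fun p => ((p.2 : ZMod n), ZMod.castHom h2 (ZMod 2) p.1)).Nodup) :
    (L.map fun p => psi p.1 p.2).Pairwise fun f g => ¬IsConj f g := by
  rw [List.pairwise_map]
  refine (List.pairwise_map.1 hL).imp fun {p q} hpq hconj => hpq ?_
  rw [((isConj_psi_iff hn).1 hconj).1, castHom_eq_of_isConj_psi hn h2 hconj]

section TwoPow

variable {r : ℕ} {k : ZMod (2 ^ r)} {l l' : (ZMod (2 ^ r))ˣ}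

lemma isConj_psi_zero_of_val_eq_two_pow_pred_sub_one (hr : 3 ≤ r)
    (hl : (l : ZMod (2 ^ r)) = ((2 ^ (r - 1) : ℕ) : ZMod (2 ^ r)) - 1)
    (hl' : (l' : ZMod (2 ^ r)) = l) (hk : k * (l + 1) = 0) : IsConj (psi k l) (psi 0 l') := by
  refine isConj_psi_of_dvd hl'.symm ?_
  rw [hl, sub_add_cancel] at hk
  obtain ⟨t, rfl⟩ := ZMod.exists_eq_two_mul_of_mul_two_pow_pred_eq_zero (by omega) hk
  -- `(2 - 2^(r-1)) (1 + 2^(r-2)) = 2`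
  refine ⟨(1 + ((2 ^ (r - 2) : ℕ) : ZMod (2 ^ r))) * t, ?_⟩
  rw [hl]
  linear_combination t * ZMod.two_pow_pred_eq_two_mul (r := r) (by omega)
    + t * ZMod.two_pow_pred_mul_two_pow_sub_two hr

lemma isConj_psi_zero_of_val_eq_two_pow_pred_add_one (hr : 3 ≤ r)
    (hl : (l : ZMod (2 ^ r)) = ((2 ^ (r - 1) : ℕ) : ZMod (2 ^ r)) + 1)
    (hl' : (l' : ZMod (2 ^ r)) = l) (hk : k * (l + 1) = 0) : IsConj (psi k l) (psi 0 l') := by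
  refine isConj_psi_of_dvd hl'.symm ?_
  -- `(2^(r-1) + 2) (1 - 2^(r-2)) = 2`
  have h2k : 2 * k = 0 := by
    rw [hl] at hk
    linear_combination (1 - ((2 ^ (r - 2) : ℕ) : ZMod (2 ^ r))) * hk
      - k * ZMod.two_pow_pred_eq_two_mul (r := r) (by omega)
      + k * ZMod.two_pow_pred_mul_two_pow_sub_two hr
  rcases ZMod.eq_zero_or_eq_two_pow_pred_of_two_mul_eq_zero (by omega) h2k with rfl | rfl
  · simp
  · exact ⟨-1, by rw [hl]; ring⟩

lemma isConj_of_orderOf_eq_two (hr : 3 ≤ r) {u₂ u₃ u₄ : (ZMod (2 ^ r))ˣ}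
    (hu₂ : (u₂ : ZMod (2 ^ r)) = ((2 ^ (r - 1) : ℕ) : ZMod (2 ^ r)) - 1)
    (hu₃ : (u₃ : ZMod (2 ^ r)) = ((2 ^ (r - 1) : ℕ) : ZMod (2 ^ r)) + 1)
    (hu₄ : (u₄ : ZMod (2 ^ r)) = -1) {g : MulAut (DihedralGroup (2 ^ r))} (hg : orderOf g = 2) :
    IsConj g (psi ((2 ^ (r - 1) : ℕ) : ZMod (2 ^ r)) 1) ∨ IsConj g (psi 0 u₂) ∨
      IsConj g (psi 0 u₃) ∨ IsConj g (psi 0 u₄) ∨ IsConj g (psi 1 u₄) := by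
  obtain ⟨k, l, rfl⟩ := exists_eq_psi ((show 2 < r by omega).trans Nat.lt_two_pow_self) g
  obtain ⟨hne, hl, hk⟩ := (orderOf_psi_eq_two_iff k l).1 hg
  rcases (ZMod.sq_eq_one_iff_of_two_le (by omega)).1 hl with hl | hl | hl | hl
  · obtain rfl := Units.val_eq_one.1 hl
    rw [Units.val_one, one_add_one_eq_two, mul_comm] at hk
    rcases ZMod.eq_zero_or_eq_two_pow_pred_of_two_mul_eq_zero (by omega) hk with rfl | rfl
    · simp at hne
    · exact .inl (IsConj.refl _)
  · exact .inr <| .inl <|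
      isConj_psi_zero_of_val_eq_two_pow_pred_sub_one hr hl (hu₂.trans hl.symm) hk
  · exact .inr <| .inr <| .inl <|
      isConj_psi_zero_of_val_eq_two_pow_pred_add_one hr hl (hu₃.trans hl.symm) hk
  · exact .inr <| .inr <| .inr <|
      isConj_psi_zero_or_psi_one_of_val_eq_neg_one hl (hu₄.trans hl.symm)

end TwoPow

end DihedralGroup

/-- For `n = 2^r`, `r ≥ 3`, the automorphism group of the dihedral group `D_n` has
exactly `5` conjugacy classes of elements of order `2`, represented by
`Ψ_{2^{r-1},1}`, `Ψ_{0,2^{r-1}-1}`, `Ψ_{0,2^{r-1}+1}`, `Ψ_{0,-1}` and `Ψ_{1,-1}`. -/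
theorem dihedral_twoPow_aut_five_involution_classes (r : ℕ) (hr : 3 ≤ r) :
    ∃ f₁ f₂ f₃ f₄ f₅ : MulAut (DihedralGroup (2 ^ r)),
      IsPsi (2 ^ r) ((2 ^ (r - 1) : ℕ) : ZMod (2 ^ r)) 1 f₁ ∧
      IsPsi (2 ^ r) 0 (((2 ^ (r - 1) : ℕ) : ZMod (2 ^ r)) - 1) f₂ ∧
      IsPsi (2 ^ r) 0 (((2 ^ (r - 1) : ℕ) : ZMod (2 ^ r)) + 1) f₃ ∧
      IsPsi (2 ^ r) 0 (-1) f₄ ∧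
      IsPsi (2 ^ r) 1 (-1) f₅ ∧
      orderOf f₁ = 2 ∧ orderOf f₂ = 2 ∧ orderOf f₃ = 2 ∧ orderOf f₄ = 2 ∧
      orderOf f₅ = 2 ∧
      List.Pairwise (fun a b => ¬ IsConj a b) [f₁, f₂, f₃, f₄, f₅] ∧
      ∀ g : MulAut (DihedralGroup (2 ^ r)), orderOf g = 2 →
        IsConj g f₁ ∨ IsConj g f₂ ∨ IsConj g f₃ ∨ IsConj g f₄ ∨ IsConj g f₅ := by
  have hn : 2 < 2 ^ r := (show 2 < r by omega).trans Nat.lt_two_pow_self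
  have hsq (x : ZMod (2 ^ r)) := ZMod.sq_eq_one_iff_of_two_le (x := x) (by omega)
  have hd := ZMod.nodup_sq_eq_one_solutions hr
  simp only [List.nodup_cons, List.mem_cons, List.not_mem_nil, or_false, not_or, List.nodup_nil,
    not_false_eq_true, and_true] at hd
  obtain ⟨⟨h₁₂, h₁₃, h₁₄⟩, ⟨h₂₃, h₂₄⟩, h₃₄⟩ := hd
  set H : ZMod (2 ^ r) := ((2 ^ (r - 1) : ℕ) : ZMod (2 ^ r))
  obtain ⟨u₂, hu₂⟩ := IsUnit.of_pow_eq_one ((hsq (H - 1)).2 (by simp)) two_ne_zero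
  obtain ⟨u₃, hu₃⟩ := IsUnit.of_pow_eq_one ((hsq (H + 1)).2 (by simp)) two_ne_zero
  obtain ⟨u₄, hu₄⟩ := IsUnit.of_pow_eq_one ((hsq (-1)).2 (by simp)) two_ne_zero
  refine ⟨psi H 1, psi 0 u₂, psi 0 u₃, psi 0 u₄, psi 1 u₄, isPsi_psi _ _,
    hu₂ ▸ isPsi_psi _ _, hu₃ ▸ isPsi_psi _ _, hu₄ ▸ isPsi_psi _ _, hu₄ ▸ isPsi_psi _ _,
    orderOf_psi_one_eq_two (ZMod.two_mul_two_pow_pred (by omega))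
      (ZMod.two_pow_pred_ne_zero (by omega)),
    orderOf_psi_zero_eq_two (by simp [hsq, hu₂]) (by rw [hu₂]; exact Ne.symm h₁₂),
    orderOf_psi_zero_eq_two (by simp [hsq, hu₃]) (by rw [hu₃]; exact Ne.symm h₁₃),
    orderOf_psi_eq_two_of_val_eq_neg_one hu₄ (Ne.symm h₁₄),
    orderOf_psi_eq_two_of_val_eq_neg_one hu₄ (Ne.symm h₁₄),
    pairwise_not_isConj_psi hn (dvd_pow_self 2 (by omega))
      [(H, 1), (0, u₂), (0, u₃), (0, u₄), (1, u₄)]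
      (by simp [-ZMod.castHom_apply, hu₂, hu₃, hu₄, h₁₂, h₁₃, h₁₄, h₂₃, h₂₄, h₃₄]),
    fun g hg => isConj_of_orderOf_eq_two hr hu₂ hu₃ hu₄ hg⟩
end
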